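/- Let p : {1,…,N} → ℝ≥0 (green power demand) and e : {1,…,N} → ℝ≥0 (per-unit solar generation). Define the battery evolution for panel size S ≥ 0 and capacity B ≥ 0 by b(0) = 0 and b(k) = min(max(b(k−1) + e(k)·S − p(k), 0), B). If S' ≥ S and the system with panel size S and capacity B satisfies b(k−1) + e(k)·S ≥ p(k) for all k (demand is always met), then the system with panel size S' and the same capacity B also satisfies b'(k−1) + e(k)·S' ≥ p(k) for all k. -/
import Mathlib

/-- Battery evolution: b(0) = 0, b(k) = min(max(b(k-1) + e(k)·S - p(k), 0), B). -/
def bat (e p : ℕ → ℝ) (S B : ℝ) : ℕ → ℝ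
  | 0 => 0
  | k + 1 => min (max (bat e p S B k + e (k + 1) * S - p (k + 1)) 0) B

lemma bat_mono (e p : ℕ → ℝ) (S S' B : ℝ) (he : ∀ k, 0 ≤ e k) (hSS' : S ≤ S') :
    ∀ k, bat e p S B k ≤ bat e p S' B k := by
  intro k
  induction k with
  | zero => simp [bat]
  | succ n ih =>
    simp only [bat]
    apply min_le_min _ le_rfl
    apply max_le_max _ le_rfl
    have : e (n+1) * S ≤ e (n+1) * S' := mul_le_mul_of_nonneg_left hSS' (he _)
    linarith

/-- Lemma 2: increasing the solar panel size does not increase the required battery capacity: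
a feasible (S, B) stays feasible for any larger panel S' with the same capacity B. -/
theorem larger_panel_stays_feasible (e p : ℕ → ℝ) (S S' B : ℝ) (N : ℕ)
    (he : ∀ k, 0 ≤ e k) (hp : ∀ k, 0 ≤ p k) (hS : 0 ≤ S) (hSS' : S ≤ S') (hB : 0 ≤ B)
    (hfeas : ∀ k ∈ Finset.Icc 1 N, p k ≤ bat e p S B (k - 1) + e k * S) :
    ∀ k ∈ Finset.Icc 1 N, p k ≤ bat e p S' B (k - 1) + e k * S' := by
  intro k hk
  have h1 := hfeas k hk
  have h2 := bat_mono e p S S' B he hSS' (k - 1)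
  have h3 : e k * S ≤ e k * S' := mul_le_mul_of_nonneg_left hSS' (he _)
  linarith
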